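/- Let l ≥ 2 and let η_1, …, η_l be Kähler differential 1-forms over k[x], given in coordinates by η_i = Σ_{j=1}^n f_{i,j} dx_j with f_{i,j} ∈ k[x], and let w ∈ Γ^n. For each i let η̃_i = η_1 ∧ ⋯ ∧ η_{i−1} ∧ η_{i+1} ∧ ⋯ ∧ η_l. Then there exist indices 1 ≤ i_1 < i_2 ≤ l such that deg_w η_{i_1} + deg_w η̃_{i_1} = deg_w η_{i_2} + deg_w η̃_{i_2} ≥ deg_w η_i + deg_w η̃_i for all i = 1, …, l. -/

import Mathlib

open MvPolynomial Polynomial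

set_option synthInstance.maxHeartbeats 1000000
set_option maxHeartbeats 1000000

variable {k : Type*} [Field k] [CharZero k] {n : ℕ}
variable {Γ : Type*} [AddCommGroup Γ] [LinearOrder Γ] [IsOrderedAddMonoid Γ]

/-- The `w`-degree of a multivariate polynomial, with `wdeg w 0 = ⊥ = -∞`. -/
noncomputable def wdeg (w : Fin n → Γ) (f : MvPolynomial (Fin n) k) : WithBot Γ :=
  f.support.sup fun d => ((∑ i, d i • w i : Γ) : WithBot Γ)

/-- The leading `w`-homogeneous form `f^w` of `f`. -/
noncomputable def lform (w : Fin n → Γ) (f : MvPolynomial (Fin n) k) :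
    MvPolynomial (Fin n) k :=
  letI : DecidableEq (WithBot Γ) := Classical.decEq _
  ∑ d ∈ f.support.filter
      (fun d => ((∑ i, d i • w i : Γ) : WithBot Γ) = wdeg w f),
    MvPolynomial.monomial d (f.coeff d)

/-- `deg_w^g Φ = max_i deg_w (φ_i g^i)` for `Φ = Σ_i φ_i y^i`. -/
noncomputable def wdegG (w : Fin n → Γ) (g : MvPolynomial (Fin n) k)
    (Φ : Polynomial (MvPolynomial (Fin n) k)) : WithBot Γ :=
  Φ.support.sup fun i => wdeg w (Φ.coeff i * g ^ i)

/-- The leading form `Φ^{w,g}` of `Φ` for the grading in which `x_j` has weight `w_j`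
and `y` has weight `deg_w g`: the sum of `φ_i^w y^i` over those `i` with
`deg_w (φ_i g^i) = deg_w^g Φ`. -/
noncomputable def pLform (w : Fin n → Γ) (g : MvPolynomial (Fin n) k)
    (Φ : Polynomial (MvPolynomial (Fin n) k)) : Polynomial (MvPolynomial (Fin n) k) :=
  letI : DecidableEq (WithBot Γ) := Classical.decEq _
  ∑ i ∈ Φ.support.filter (fun i => wdeg w (Φ.coeff i * g ^ i) = wdegG w g Φ),
    Polynomial.C (lform w (Φ.coeff i)) * Polynomial.X ^ i

/-- `m_w^g(Φ) = min { i : deg_w^g (∂_y^i Φ) = deg_w ((∂_y^i Φ)(g)) }`. -/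
noncomputable def mwg (w : Fin n → Γ) (g : MvPolynomial (Fin n) k)
    (Φ : Polynomial (MvPolynomial (Fin n) k)) : ℕ :=
  sInf {i : ℕ |
    wdegG w g (Polynomial.derivative^[i] Φ) = wdeg w ((Polynomial.derivative^[i] Φ).eval g)}

/-- The `w`-degree of the differential form `dh_1 ∧ ⋯ ∧ dh_s`: the maximum over all
`s`-tuples of indices of the `w`-degree of the corresponding `s × s` Jacobian minor
plus the sum of the corresponding weights (noninjective tuples contribute `⊥`). -/
noncomputable def wedgeDeg (w : Fin n → Γ) {s : ℕ} (h : Fin s → MvPolynomial (Fin n) k) :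
    WithBot Γ :=
  Finset.univ.sup fun e : Fin s → Fin n =>
    wdeg w (Matrix.det (Matrix.of fun a b : Fin s => MvPolynomial.pderiv (e b) (h a)))
      + ((∑ b, w (e b) : Γ) : WithBot Γ)

/-- The initial algebra `A^w`: the `k`-subalgebra generated by `f^w` for `f ∈ A \ {0}`. -/
noncomputable def initAlg (w : Fin n → Γ) (A : Subalgebra k (MvPolynomial (Fin n) k)) :
    Subalgebra k (MvPolynomial (Fin n) k) :=
  Algebra.adjoin k (lform w '' ((A : Set (MvPolynomial (Fin n) k)) \ {0}))

/-- The field of fractions `K^w` of `A^w`, realized as a subfield of the fraction field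
of `k[x]`. -/
noncomputable def KW (w : Fin n → Γ) (A : Subalgebra k (MvPolynomial (Fin n) k)) :
    Subfield (FractionRing (MvPolynomial (Fin n) k)) :=
  Subfield.closure
    (algebraMap (MvPolynomial (Fin n) k) (FractionRing (MvPolynomial (Fin n) k)) ''
      (initAlg w A : Set (MvPolynomial (Fin n) k)))

/-- The field of fractions of a subalgebra `A` of `k[x]`, realized as a subfield of the
fraction field of `k[x]`. -/
noncomputable def fracSub (A : Subalgebra k (MvPolynomial (Fin n) k)) :
    Subfield (FractionRing (MvPolynomial (Fin n) k)) :=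
  Subfield.closure
    (algebraMap (MvPolynomial (Fin n) k) (FractionRing (MvPolynomial (Fin n) k)) ''
      (A : Set (MvPolynomial (Fin n) k)))

/-- A polynomial is `w`-homogeneous if all its monomials have the same `w`-degree. -/
def IsWHom (w : Fin n → Γ) (f : MvPolynomial (Fin n) k) : Prop :=
  ∃ γ : Γ, ∀ d ∈ f.support, (∑ i, d i • w i : Γ) = γ

/-- The `w`-degree of the 1-form `Σ_j c_j dx_j`. -/
noncomputable def formDeg (w : Fin n → Γ) (c : Fin n → MvPolynomial (Fin n) k) : WithBot Γ :=
  Finset.univ.sup fun j => wdeg w (c j) + ((w j : Γ) : WithBot Γ)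

/-- The `w`-degree of the wedge of the `s` 1-forms `η_a = Σ_j c_{a,j} dx_j`: the maximum
over index tuples of the `w`-degree of the corresponding minor of the coefficient matrix
plus the sum of the corresponding weights. -/
noncomputable def wedgeDeg1 (w : Fin n → Γ) {s : ℕ}
    (c : Fin s → Fin n → MvPolynomial (Fin n) k) : WithBot Γ :=
  Finset.univ.sup fun e : Fin s → Fin n =>
    wdeg w (Matrix.det (Matrix.of fun a b : Fin s => c a (e b)))
      + ((∑ b, w (e b) : Γ) : WithBot Γ)

set_option linter.unusedSectionVars false

/-!
Write `v i = deg_w η_i + deg_w η̃_i` and `Ω = η_1 ∧ ⋯ ∧ η_l`. Expanding any minor of `Ω` along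
the row of `η_i` gives `deg_w Ω ≤ v i` for every `i`. If `v i` were a strict maximum, pick a
coefficient of `η_i` and a minor of `η̃_i` realizing their degrees; the minor of `Ω` on these
columns, expanded along the column of that coefficient, has a unique term of top degree, so
`deg_w Ω ≥ v i > v j ≥ deg_w Ω` for any `j ≠ i`. The top term survives because weighted degrees
are additive on products.
-/

namespace MvPolynomial

variable {σ R M : Type*} [AddCommMonoid M] {w : σ → M}

section SemilatticeSup

variable [SemilatticeSup M]

section CommSemiring

variable [CommSemiring R]

theorem le_weightedTotalDegree' {f : MvPolynomial σ R} {d : σ →₀ ℕ} (hd : d ∈ f.support) :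
    (Finsupp.weight w d : WithBot M) ≤ weightedTotalDegree' w f :=
  Finset.le_sup (f := fun d => (Finsupp.weight w d : WithBot M)) hd

theorem weightedTotalDegree'_add_le (f g : MvPolynomial σ R) :
    weightedTotalDegree' w (f + g) ≤ weightedTotalDegree' w f ⊔ weightedTotalDegree' w g := by
  classical
  refine Finset.sup_le fun d hd => ?_
  rcases Finset.mem_union.mp (support_add hd) with h | h
  · exact le_sup_of_le_left (le_weightedTotalDegree' h)
  · exact le_sup_of_le_right (le_weightedTotalDegree' h)

theorem weightedTotalDegree'_sum_le {ι : Type*} (s : Finset ι) (f : ι → MvPolynomial σ R) :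
    weightedTotalDegree' w (∑ a ∈ s, f a) ≤ s.sup fun a => weightedTotalDegree' w (f a) := by
  induction s using Finset.cons_induction with
  | empty => simp [weightedTotalDegree'_zero]
  | cons a s ha ih =>
    rw [Finset.sum_cons, Finset.sup_cons]
    exact (weightedTotalDegree'_add_le _ _).trans (sup_le_sup_left ih _)

theorem weightedTotalDegree'_mul_le [IsOrderedAddMonoid M] (f g : MvPolynomial σ R) :
    weightedTotalDegree' w (f * g) ≤ weightedTotalDegree' w f + weightedTotalDegree' w g := by
  classical
  refine Finset.sup_le fun d hd => ?_
  obtain ⟨u, hu, v, hv, rfl⟩ := Finset.mem_add.mp (support_mul f g hd)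
  rw [map_add, WithBot.coe_add]
  exact add_le_add (le_weightedTotalDegree' hu) (le_weightedTotalDegree' hv)

end CommSemiring

variable [CommRing R]

theorem weightedTotalDegree'_neg (f : MvPolynomial σ R) :
    weightedTotalDegree' w (-f) = weightedTotalDegree' w f := by
  simp [weightedTotalDegree', support_neg]

theorem weightedTotalDegree'_neg_one_pow_mul (m : ℕ) (f : MvPolynomial σ R) :
    weightedTotalDegree' w ((-1) ^ m * f) = weightedTotalDegree' w f := by
  rcases neg_one_pow_eq_or (MvPolynomial σ R) m with h | h <;>
    simp [h, weightedTotalDegree'_neg]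

end SemilatticeSup

variable [LinearOrder M]

theorem exists_weightedTotalDegree'_sum_le [CommSemiring R] {ι : Type*} {s : Finset ι}
    (hs : s.Nonempty) (f : ι → MvPolynomial σ R) :
    ∃ a ∈ s, weightedTotalDegree' w (∑ a ∈ s, f a) ≤ weightedTotalDegree' w (f a) := by
  obtain ⟨a, ha, hmax⟩ := Finset.exists_mem_eq_sup s hs fun a => weightedTotalDegree' w (f a)
  exact ⟨a, ha, hmax ▸ weightedTotalDegree'_sum_le s f⟩

variable [CommRing R]

theorem weightedTotalDegree'_add_eq_left_of_lt {f g : MvPolynomial σ R}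
    (h : weightedTotalDegree' w g < weightedTotalDegree' w f) :
    weightedTotalDegree' w (f + g) = weightedTotalDegree' w f := by
  refine le_antisymm ((weightedTotalDegree'_add_le f g).trans (sup_le le_rfl h.le)) ?_
  have h' := weightedTotalDegree'_add_le (w := w) (f + g) (-g)
  rw [add_neg_cancel_right, weightedTotalDegree'_neg] at h'
  exact le_of_not_gt fun hlt => h'.not_gt (sup_lt_iff.mpr ⟨hlt, h⟩)

theorem weightedTotalDegree'_sum_eq_of_lt {ι : Type*} {s : Finset ι} {f : ι → MvPolynomial σ R}
    {i : ι} (hi : i ∈ s) (hfi : f i ≠ 0)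
    (h : ∀ a ∈ s, a ≠ i → weightedTotalDegree' w (f a) < weightedTotalDegree' w (f i)) :
    weightedTotalDegree' w (∑ a ∈ s, f a) = weightedTotalDegree' w (f i) := by
  classical
  rw [← Finset.add_sum_erase s f hi]
  refine weightedTotalDegree'_add_eq_left_of_lt ((weightedTotalDegree'_sum_le _ f).trans_lt ?_)
  rw [Finset.sup_lt_iff (bot_lt_iff_ne_bot.mpr ((weightedTotalDegree'_eq_bot_iff w _).not.mpr hfi))]
  exact fun a ha => h a (Finset.mem_of_mem_erase ha) (Finset.ne_of_mem_erase ha)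

theorem weightedTotalDegree'_sub_weightedHomogeneousComponent_lt {f : MvPolynomial σ R} {m : M}
    (hm : weightedTotalDegree' w f = m) :
    weightedTotalDegree' w (f - weightedHomogeneousComponent w m f) < m := by
  classical
  refine (Finset.sup_lt_iff (WithBot.bot_lt_coe m)).mpr fun d hd => ?_
  rw [mem_support_iff, coeff_sub, coeff_weightedHomogeneousComponent] at hd
  split_ifs at hd with hdm
  · exact absurd (sub_self _) hd
  · refine lt_of_le_of_ne (hm ▸ le_weightedTotalDegree' ?_) (WithBot.coe_injective.ne hdm)
    simpa using hd

theorem weightedHomogeneousComponent_ne_zero {f : MvPolynomial σ R} {m : M}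
    (hm : weightedTotalDegree' w f = m) : weightedHomogeneousComponent w m f ≠ 0 := by
  classical
  have hf : f ≠ 0 := by rintro rfl; simp [weightedTotalDegree'_zero] at hm
  obtain ⟨d, hd, hdm⟩ := Finset.exists_mem_eq_sup f.support (support_nonempty.mpr hf)
    fun d => (Finsupp.weight w d : WithBot M)
  have hdm : Finsupp.weight w d = m := WithBot.coe_injective (hdm.symm.trans hm)
  refine ne_zero_iff.mpr ⟨d, ?_⟩
  rw [coeff_weightedHomogeneousComponent, if_pos hdm]
  exact mem_support_iff.mp hd

-- With `F`, `G` the top weighted homogeneous components of `f`, `g`, the product `F * G` is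
-- nonzero, homogeneous of degree `deg f + deg g`, and dominates the rest of `f * g`.
theorem weightedTotalDegree'_mul [IsDomain R] [IsOrderedCancelAddMonoid M]
    (f g : MvPolynomial σ R) :
    weightedTotalDegree' w (f * g) = weightedTotalDegree' w f + weightedTotalDegree' w g := by
  rcases eq_or_ne f 0 with rfl | hf
  · simp [weightedTotalDegree'_zero]
  rcases eq_or_ne g 0 with rfl | hg
  · simp [weightedTotalDegree'_zero]
  obtain ⟨m, hm⟩ :=
    WithBot.ne_bot_iff_exists.mp ((weightedTotalDegree'_eq_bot_iff w f).not.mpr hf)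
  obtain ⟨m', hm'⟩ :=
    WithBot.ne_bot_iff_exists.mp ((weightedTotalDegree'_eq_bot_iff w g).not.mpr hg)
  set F := weightedHomogeneousComponent w m f
  set G := weightedHomogeneousComponent w m' g
  have hFG : weightedTotalDegree' w (F * G) = ↑(m + m') :=
    ((weightedHomogeneousComponent_isWeightedHomogeneous m f).mul
      (weightedHomogeneousComponent_isWeightedHomogeneous m' g)).weighted_total_degree
      (mul_ne_zero (weightedHomogeneousComponent_ne_zero hm.symm)
        (weightedHomogeneousComponent_ne_zero hm'.symm))
  have hF : weightedTotalDegree' w F ≤ m :=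
    Finset.sup_le fun d hd => WithBot.coe_le_coe.mpr
      (weightedHomogeneousComponent_isWeightedHomogeneous m f (mem_support_iff.mp hd)).le
  have hrest : weightedTotalDegree' w (F * (g - G) + (f - F) * g) < ↑(m + m') := by
    refine (weightedTotalDegree'_add_le _ _).trans_lt (sup_lt_iff.mpr ⟨?_, ?_⟩) <;>
      refine (weightedTotalDegree'_mul_le _ _).trans_lt ?_ <;> rw [WithBot.coe_add]
    · exact (add_le_add hF le_rfl).trans_lt (WithBot.add_lt_add_left WithBot.coe_ne_bot
        (weightedTotalDegree'_sub_weightedHomogeneousComponent_lt hm'.symm))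
    · exact (add_le_add le_rfl hm'.ge).trans_lt (WithBot.add_lt_add_right WithBot.coe_ne_bot
        (weightedTotalDegree'_sub_weightedHomogeneousComponent_lt hm.symm))
  have hsplit : f * g = F * G + (F * (g - G) + (f - F) * g) := by ring
  rw [hsplit, weightedTotalDegree'_add_eq_left_of_lt (hFG ▸ hrest), hFG, ← hm, ← hm',
    WithBot.coe_add]

end MvPolynomial

theorem Finset.exists_mem_eq_sup_of_ne_bot {ι α : Type*} [LinearOrder α] [OrderBot α]
    {s : Finset ι} {f : ι → α} (h : s.sup f ≠ ⊥) : ∃ i ∈ s, s.sup f = f i :=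
  s.exists_mem_eq_sup
    (Finset.nonempty_iff_ne_empty.mpr (by rintro rfl; exact h Finset.sup_empty)) f

theorem exists_lt_eq_of_forall_exists_ne_le {ι α : Type*} [LinearOrder ι] [Finite ι]
    [Nonempty ι] [LinearOrder α] (v : ι → α) (h : ∀ i, ∃ j ≠ i, v i ≤ v j) :
    ∃ i₁ i₂, i₁ < i₂ ∧ v i₁ = v i₂ ∧ ∀ i, v i ≤ v i₁ := by
  obtain ⟨i, hi⟩ := Finite.exists_max v
  obtain ⟨j, hji, hij⟩ := h i
  have hj : v j = v i := le_antisymm (hi j) hij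
  rcases hji.lt_or_gt with hlt | hlt
  · exact ⟨j, i, hlt, hj, fun a => (hi a).trans hj.ge⟩
  · exact ⟨i, j, hlt, hj.symm, hi⟩

section FormDegrees

variable (w : Fin n → Γ)

theorem wdeg_eq_weightedTotalDegree' (f : MvPolynomial (Fin n) k) :
    wdeg w f = weightedTotalDegree' w f := by
  refine Finset.sup_congr rfl fun d _ => ?_
  rw [Finsupp.weight_apply, Finsupp.sum_fintype _ _ fun i => zero_smul ℕ (w i)]

theorem le_formDeg (c : Fin n → MvPolynomial (Fin n) k) (j : Fin n) :
    weightedTotalDegree' w (c j) + (w j : WithBot Γ) ≤ formDeg w c := by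
  rw [← wdeg_eq_weightedTotalDegree']
  exact Finset.le_sup (f := fun j => wdeg w (c j) + (w j : WithBot Γ)) (Finset.mem_univ j)

theorem exists_formDeg_eq (c : Fin n → MvPolynomial (Fin n) k) (h : formDeg w c ≠ ⊥) :
    ∃ j, formDeg w c = weightedTotalDegree' w (c j) + (w j : WithBot Γ) := by
  obtain ⟨j, -, hj⟩ := Finset.exists_mem_eq_sup_of_ne_bot h
  exact ⟨j, by rw [formDeg, hj, wdeg_eq_weightedTotalDegree']⟩

theorem le_wedgeDeg1 {s : ℕ} (c : Fin s → Fin n → MvPolynomial (Fin n) k) (e : Fin s → Fin n) :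
    weightedTotalDegree' w (Matrix.of fun a b => c a (e b)).det + ((∑ b, w (e b) : Γ) : WithBot Γ)
      ≤ wedgeDeg1 w c := by
  rw [← wdeg_eq_weightedTotalDegree']
  exact Finset.le_sup (f := fun e : Fin s → Fin n =>
    wdeg w (Matrix.of fun a b => c a (e b)).det + ((∑ b, w (e b) : Γ) : WithBot Γ))
    (Finset.mem_univ e)

theorem exists_wedgeDeg1_eq {s : ℕ} (c : Fin s → Fin n → MvPolynomial (Fin n) k)
    (h : wedgeDeg1 w c ≠ ⊥) :
    ∃ e : Fin s → Fin n, wedgeDeg1 w c = weightedTotalDegree' w (Matrix.of fun a b => c a (e b)).det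
      + ((∑ b, w (e b) : Γ) : WithBot Γ) := by
  obtain ⟨e, -, he⟩ := Finset.exists_mem_eq_sup_of_ne_bot h
  exact ⟨e, by rw [wedgeDeg1, he, wdeg_eq_weightedTotalDegree']⟩

end FormDegrees

section SplitDegree

variable (w : Fin n → Γ) {l : ℕ} (c : Fin (l + 1) → Fin n → MvPolynomial (Fin n) k)

noncomputable def splitDeg (i : Fin (l + 1)) : WithBot Γ :=
  formDeg w (c i) + wedgeDeg1 w (fun s : Fin l => c (i.succAbove s))

theorem wedgeDeg1_le_splitDeg (i : Fin (l + 1)) : wedgeDeg1 w c ≤ splitDeg w c i := by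
  refine Finset.sup_le fun e _ => ?_
  rw [wdeg_eq_weightedTotalDegree', Matrix.det_succ_row _ i]
  obtain ⟨b, -, hb⟩ := exists_weightedTotalDegree'_sum_le (w := w) Finset.univ_nonempty
    fun b : Fin (l + 1) => (-1) ^ ((i : ℕ) + b) * (Matrix.of fun a b => c a (e b)) i b *
      ((Matrix.of fun a b => c a (e b)).submatrix i.succAbove b.succAbove).det
  set D := (Matrix.of fun s t => c (i.succAbove s) (e (b.succAbove t))).det
  calc _ ≤ weightedTotalDegree' w (c i (e b) * D) + ((∑ b, w (e b) : Γ) : WithBot Γ) := by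
        gcongr
        refine hb.trans_eq ?_
        rw [mul_assoc, weightedTotalDegree'_neg_one_pow_mul]
        rfl
    _ ≤ (weightedTotalDegree' w (c i (e b)) + (w (e b) : WithBot Γ)) +
        (weightedTotalDegree' w D + ((∑ t, w (e (b.succAbove t)) : Γ) : WithBot Γ)) := by
        rw [Fin.sum_univ_succAbove _ b, WithBot.coe_add, add_add_add_comm]
        gcongr
        exact weightedTotalDegree'_mul_le _ _
    _ ≤ splitDeg w c i :=
        add_le_add (le_formDeg w _ _) (le_wedgeDeg1 w _ fun t => e (b.succAbove t))

theorem splitDeg_le_wedgeDeg1_of_forall_lt (i : Fin (l + 1))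
    (h : ∀ a ≠ i, splitDeg w c a < splitDeg w c i) : splitDeg w c i ≤ wedgeDeg1 w c := by
  by_cases hbot : splitDeg w c i = ⊥
  · simp [hbot]
  obtain ⟨hform, hwedge⟩ := WithBot.add_ne_bot.mp hbot
  obtain ⟨j, hj⟩ := exists_formDeg_eq w (c i) hform
  obtain ⟨e, he⟩ := exists_wedgeDeg1_eq w _ hwedge
  set g : Fin (l + 1) → Fin n := Fin.cons j e
  set D : Fin (l + 1) → MvPolynomial (Fin n) k :=
    fun a => (Matrix.of fun s t => c (a.succAbove s) (e t)).det
  set term : Fin (l + 1) → MvPolynomial (Fin n) k := fun a => (-1) ^ (a : ℕ) * (c a j * D a)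
  set W : WithBot Γ := ((∑ b, w (g b) : Γ) : WithBot Γ)
  have hdet : (Matrix.of fun a b => c a (g b)).det = ∑ a, term a := by
    rw [Matrix.det_succ_column_zero]
    simp [term, D, g, mul_assoc, Matrix.submatrix]
  have hW : W = ↑(w j) + ↑(∑ t, w (e t)) := by
    simp [W, g, Fin.sum_univ_succ]
  have hterm : ∀ a, weightedTotalDegree' w (term a) + W =
      (weightedTotalDegree' w (c a j) + ↑(w j)) +
        (weightedTotalDegree' w (D a) + ↑(∑ t, w (e t))) := fun a => by
    rw [weightedTotalDegree'_neg_one_pow_mul, weightedTotalDegree'_mul, hW, add_add_add_comm]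
  have hle : ∀ a, weightedTotalDegree' w (term a) + W ≤ splitDeg w c a := fun a =>
    (hterm a).trans_le (add_le_add (le_formDeg w _ j) (le_wedgeDeg1 w _ e))
  have heq : weightedTotalDegree' w (term i) + W = splitDeg w c i := by
    rw [hterm, splitDeg, hj, he]
  have hlt : ∀ a ≠ i, weightedTotalDegree' w (term a) < weightedTotalDegree' w (term i) :=
    fun a ha => (WithBot.add_lt_add_iff_right WithBot.coe_ne_bot).mp
      ((hle a).trans_lt ((h a ha).trans_eq heq.symm))
  have hne : term i ≠ 0 := by
    rintro h0
    rw [h0, weightedTotalDegree'_zero, WithBot.bot_add] at heq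
    exact hbot heq.symm
  calc splitDeg w c i = weightedTotalDegree' w (term i) + W := heq.symm
    _ = weightedTotalDegree' w (Matrix.of fun a b => c a (g b)).det + W := by
        rw [hdet, weightedTotalDegree'_sum_eq_of_lt (Finset.mem_univ i) hne fun a _ => hlt a]
    _ ≤ wedgeDeg1 w c := le_wedgeDeg1 w c g

theorem exists_ne_splitDeg_le (hl : 1 ≤ l) (i : Fin (l + 1)) :
    ∃ j ≠ i, splitDeg w c i ≤ splitDeg w c j := by
  by_contra! h
  have : Nontrivial (Fin (l + 1)) := Fin.nontrivial_iff_two_le.mpr (by omega)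
  obtain ⟨j, hj⟩ := exists_ne i
  exact (h j hj).not_ge
    ((splitDeg_le_wedgeDeg1_of_forall_lt w c i h).trans (wedgeDeg1_le_splitDeg w c j))

end SplitDegree

/-- For `l + 1 ≥ 2` Kähler differential 1-forms `η_i = Σ_j c_{i,j} dx_j` over `k[x]`,
there exist indices `i₁ < i₂` such that
`deg_w η_{i₁} + deg_w η̃_{i₁} = deg_w η_{i₂} + deg_w η̃_{i₂} ≥ deg_w η_i + deg_w η̃_i`
for all `i`, where `η̃_i` is the wedge of all the forms except `η_i`. -/
theorem stmt19 (l : ℕ) (hl : 1 ≤ l) (c : Fin (l + 1) → Fin n → MvPolynomial (Fin n) k)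
    (w : Fin n → Γ) :
    ∃ i₁ i₂ : Fin (l + 1), i₁ < i₂ ∧
      formDeg w (c i₁) + wedgeDeg1 w (fun s : Fin l => c (i₁.succAbove s))
        = formDeg w (c i₂) + wedgeDeg1 w (fun s : Fin l => c (i₂.succAbove s)) ∧
      ∀ i : Fin (l + 1),
        formDeg w (c i) + wedgeDeg1 w (fun s : Fin l => c (i.succAbove s))
          ≤ formDeg w (c i₁) + wedgeDeg1 w (fun s : Fin l => c (i₁.succAbove s)) :=
  exists_lt_eq_of_forall_exists_ne_le (splitDeg w c) (exists_ne_splitDeg_le w c hl)
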